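/- Let ϑ_P be a primitive random substitution with Perron–Frobenius eigenvalue λ and right Perron–Frobenius eigenvector R. Then for all n ∈ N, (λ^n − 1)^{-1}·H_n^T R ≤ (λ − 1)^{-1}·H_1^T R. If ϑ_P has unique realisation paths, then equality holds for all n ∈ N if and only if ϑ_P satisfies the disjoint set condition. -/

import Mathlib

open Filter MeasureTheory

namespace RandomSubstitutionTheory

variable {A : Type*} [Fintype A] [DecidableEq A]

/-- The set of realisations of `ϑ(u)` for a word `u`. -/
def reals (θ : A → Finset (List A)) : List A → Finset (List A)
  | [] => {[]}
  | a :: u => (θ a).biUnion fun v => (reals θ u).image fun w => v ++ w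

/-- The set of realisations of `ϑ^n(u)` for a word `u`. -/
def realsIter (θ : A → Finset (List A)) : ℕ → List A → Finset (List A)
  | 0, u => {u}
  | n + 1, u => (reals θ u).biUnion fun v => realsIter θ n v

/-- `wordProb θ P u w` is the probability `P[ϑ_P(u) = w]`, each letter of `u` being
substituted independently. -/
noncomputable def wordProb (θ : A → Finset (List A)) (P : A → List A → ℝ) :
    List A → List A → ℝ
  | [], w => if w = [] then 1 else 0
  | a :: u, w =>
      ∑ v ∈ θ a, P a v * (if v <+: w then wordProb θ P u (w.drop v.length) else 0)

/-- `iterProb θ P n u w` is the probability `P[ϑ_P^n(u) = w]` of the induced Markov chain. -/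
noncomputable def iterProb (θ : A → Finset (List A)) (P : A → List A → ℝ) :
    ℕ → List A → List A → ℝ
  | 0, u, w => if u = w then 1 else 0
  | n + 1, u, w => ∑ v ∈ reals θ u, wordProb θ P u v * iterProb θ P n v w

/-- The substitution matrix `M_{ij} = E[|ϑ_P(a_j)|_{a_i}]`. -/
noncomputable def substM (θ : A → Finset (List A)) (P : A → List A → ℝ) :
    Matrix A A ℝ :=
  Matrix.of fun i j => ∑ w ∈ θ j, P j w * (w.count i : ℝ)

/-- The defining data of a random substitution: nonempty finite sets of nonempty words
and strictly positive probability vectors. -/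
def IsRandomSubstitution (θ : A → Finset (List A)) (P : A → List A → ℝ) : Prop :=
  (∀ a, (θ a).Nonempty) ∧ (∀ a, ∀ w ∈ θ a, w ≠ []) ∧
    (∀ a, ∀ w ∈ θ a, 0 < P a w) ∧ (∀ a w, w ∉ θ a → P a w = 0) ∧
    ∀ a, ∑ w ∈ θ a, P a w = 1

/-- Primitivity of the substitution matrix: some power has strictly positive entries. -/
def IsPrimitive (θ : A → Finset (List A)) (P : A → List A → ℝ) : Prop :=
  ∃ k : ℕ, ∀ i j : A, 0 < (substM θ P ^ k) i j

/-- The Perron–Frobenius eigenvalue is `> 1` (witnessed by a positive right eigenvector). -/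
def IsExpanding (θ : A → Finset (List A)) (P : A → List A → ℝ) : Prop :=
  ∃ lam : ℝ, 1 < lam ∧ ∃ R : A → ℝ, (∀ a, 0 < R a) ∧ (substM θ P).mulVec R = lam • R

/-- A word is legal if it occurs as a subword of some level-`k` inflation word. -/
def Legal (θ : A → Finset (List A)) (u : List A) : Prop :=
  ∃ (a : A) (k : ℕ) (w : List A), w ∈ realsIter θ k [a] ∧ u <:+: w

/-- All words of length `n` over the alphabet. -/
def allWords (A : Type*) [Fintype A] [DecidableEq A] (n : ℕ) : Finset (List A) :=
  (Finset.univ : Finset (Fin n → A)).image List.ofFn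

/-- All legal words of length `n`. -/
noncomputable def legalWords (θ : A → Finset (List A)) (n : ℕ) : Finset (List A) :=
  letI := Classical.decPred (Legal θ)
  (allWords A n).filter (Legal θ)

/-- The left shift on bi-infinite sequences. -/
def shift : (ℤ → A) → ℤ → A := fun x i => x (i + 1)

/-- The finite word of length `n` read off a bi-infinite sequence starting at position `m`. -/
def window (x : ℤ → A) (m : ℤ) (n : ℕ) : List A :=
  (List.range n).map fun t => x (m + (t : ℤ))

/-- The random substitution subshift `X_ϑ`. -/
def Xtheta (θ : A → Finset (List A)) : Set (ℤ → A) :=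
  {x | ∀ (m : ℤ) (n : ℕ), Legal θ (window x m n)}

/-- The cylinder set of the word `v` at position `m`. -/
def cylinder (v : List A) (m : ℤ) : Set (ℤ → A) :=
  {x | window x m v.length = v}

/-- The number `|w|_v` of (possibly overlapping) occurrences of `v` in `w`. -/
def occCount (v w : List A) : ℕ :=
  ((List.range w.length).filter fun i => decide (v <+: w.drop i)).length

/-- Expected length `E[|ϑ_P^k(a)|]`. -/
noncomputable def expLen (θ : A → Finset (List A)) (P : A → List A → ℝ)
    (k : ℕ) (a : A) : ℝ :=
  ∑ w ∈ realsIter θ k [a], iterProb θ P k [a] w * (w.length : ℝ)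

/-- Expected number of occurrences `E[|ϑ_P^k(a)|_v]`. -/
noncomputable def expCount (θ : A → Finset (List A)) (P : A → List A → ℝ)
    (k : ℕ) (a : A) (v : List A) : ℝ :=
  ∑ w ∈ realsIter θ k [a], iterProb θ P k [a] w * (occCount v w : ℝ)

/-- `μ` is the frequency measure of `(ϑ, P)`: a shift-invariant Borel probability measure
supported on `X_ϑ` whose cylinder values are the expected word frequencies. -/
def IsFrequencyMeasure [MeasurableSpace A] (θ : A → Finset (List A))
    (P : A → List A → ℝ) (μ : Measure (ℤ → A)) : Prop :=
  IsProbabilityMeasure μ ∧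
    (∀ s : Set (ℤ → A), MeasurableSet s → μ (shift ⁻¹' s) = μ s) ∧
    μ (Xtheta θ) = 1 ∧
    ∀ v : List A, Legal θ v → ∀ (m : ℤ) (a : A),
      Tendsto (fun k : ℕ => expCount θ P k a v / expLen θ P k a) atTop
        (nhds ((μ (cylinder v m)).toReal))

/-- The `n`-th entropy sum `∑_{u ∈ L_ϑ^n} -μ[u] log μ[u]`. -/
noncomputable def entropySeq [MeasurableSpace A] (θ : A → Finset (List A))
    (μ : Measure (ℤ → A)) (n : ℕ) : ℝ :=
  ∑ u ∈ legalWords θ n, Real.negMulLog ((μ (cylinder u 0)).toReal)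

/-- The measure-theoretic (Kolmogorov–Sinai) entropy of the shift with respect to `μ`,
computed along cylinder partitions. -/
noncomputable def measEntropy [MeasurableSpace A] (θ : A → Finset (List A))
    (μ : Measure (ℤ → A)) : ℝ :=
  limsup (fun n : ℕ => entropySeq θ μ n / (n : ℝ)) atTop

/-- The topological entropy of the subshift `X_ϑ`. -/
noncomputable def topEntropy (θ : A → Finset (List A)) : ℝ :=
  limsup (fun n : ℕ => Real.log ((legalWords θ n).card) / (n : ℝ)) atTop

/-- The entropy vector `H_{k,a} = H(ϑ_P^k(a))`. -/
noncomputable def Hvec (θ : A → Finset (List A)) (P : A → List A → ℝ)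
    (k : ℕ) (a : A) : ℝ :=
  ∑ w ∈ realsIter θ k [a], Real.negMulLog (iterProb θ P k [a] w)

/-- The inner product `H_k^T R`. -/
noncomputable def HdotR (θ : A → Finset (List A)) (P : A → List A → ℝ)
    (R : A → ℝ) (k : ℕ) : ℝ :=
  ∑ a, Hvec θ P k a * R a

/-- Binary entropy `H(p) = -p log p - (1-p) log (1-p)`. -/
noncomputable def binEnt (p : ℝ) : ℝ := Real.negMulLog p + Real.negMulLog (1 - p)

/-- Unique realisation paths: concatenation of level-`k` inflation words of the letters of a
legal word is injective. -/
def UniqueRealisationPaths (θ : A → Finset (List A)) : Prop :=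
  ∀ v : List A, Legal θ v → ∀ k : ℕ, ∀ f g : Fin v.length → List A,
    (∀ i, f i ∈ realsIter θ k [v.get i]) → (∀ i, g i ∈ realsIter θ k [v.get i]) →
      (List.ofFn f).flatten = (List.ofFn g).flatten → f = g

/-- The disjoint set condition. -/
def DisjointSetCondition (θ : A → Finset (List A)) : Prop :=
  ∀ (a : A) (k : ℕ), ∀ u ∈ θ a, ∀ v ∈ θ a, u ≠ v →
    ∀ w, w ∈ realsIter θ k u → w ∉ realsIter θ k v

/-- The identical set condition. -/
def IdenticalSetCondition (θ : A → Finset (List A)) : Prop :=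
  ∀ (a : A) (k : ℕ), ∀ u ∈ θ a, ∀ v ∈ θ a, realsIter θ k u = realsIter θ k v

/-- Identical production probabilities. -/
def IdenticalProductionProbabilities (θ : A → Finset (List A))
    (P : A → List A → ℝ) : Prop :=
  ∀ a : A, ∀ u ∈ θ a, ∀ v ∈ θ a, ∀ (k : ℕ) (w : List A),
    iterProb θ P k u w = iterProb θ P k v w

/-- The disjoint set condition for the `k`-th power `ϑ^k`. -/
def DisjointSetConditionPow (θ : A → Finset (List A)) (k : ℕ) : Prop :=
  ∀ (a : A) (j : ℕ), ∀ u ∈ realsIter θ k [a], ∀ v ∈ realsIter θ k [a], u ≠ v →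
    ∀ w, w ∈ realsIter θ (k * j) u → w ∉ realsIter θ (k * j) v

/-- The identical set condition for the `k`-th power `ϑ^k`. -/
def IdenticalSetConditionPow (θ : A → Finset (List A)) (k : ℕ) : Prop :=
  ∀ (a : A) (j : ℕ), ∀ u ∈ realsIter θ k [a], ∀ v ∈ realsIter θ k [a],
    realsIter θ (k * j) u = realsIter θ (k * j) v

/-- Identical production probabilities for the `k`-th power `ϑ^k`. -/
def IdenticalProductionProbabilitiesPow (θ : A → Finset (List A))
    (P : A → List A → ℝ) (k : ℕ) : Prop :=
  ∀ a : A, ∀ u ∈ realsIter θ k [a], ∀ v ∈ realsIter θ k [a], ∀ (j : ℕ) (w : List A),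
    iterProb θ P (k * j) u w = iterProb θ P (k * j) v w

/-- Compatibility: all realisations of a letter have the same abelianisation. -/
def Compatible (θ : A → Finset (List A)) : Prop :=
  ∀ a : A, ∀ u ∈ θ a, ∀ v ∈ θ a, ∀ b : A, u.count b = v.count b

/-- Constant length `ℓ ≥ 2`. -/
def ConstantLength (θ : A → Finset (List A)) (ℓ : ℕ) : Prop :=
  2 ≤ ℓ ∧ ∀ a : A, ∀ w ∈ θ a, w.length = ℓ

/-- The set `ϑ(y)` of bi-infinite sequences obtained by substituting each letter of `y`,
with the image of `y 0` beginning at position `0`. -/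
def substSeq (θ : A → Finset (List A)) (y : ℤ → A) : Set (ℤ → A) :=
  {x | ∃ v : ℤ → List A, (∀ j, v j ∈ θ (y j)) ∧
    ∃ p : ℤ → ℤ, p 0 = 0 ∧ (∀ j, p (j + 1) = p j + (v j).length) ∧
      ∀ (j : ℤ) (t : ℕ) (ht : t < (v j).length), x (p j + (t : ℤ)) = (v j).get ⟨t, ht⟩}

/-- `ϑ(X)` for a set of bi-infinite sequences. -/
def substImage (θ : A → Finset (List A)) (X : Set (ℤ → A)) : Set (ℤ → A) :=
  ⋃ y ∈ X, substSeq θ y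

/-- The set `ϑ^m(y)` of bi-infinite sequences. -/
def substSeqPow (θ : A → Finset (List A)) : ℕ → (ℤ → A) → Set (ℤ → A)
  | 0, y => {y}
  | m + 1, y => ⋃ z ∈ substSeq θ y, substSeqPow θ m z

/-- The maximal length of an inflation word of the letter `a` (equals the common length
when lengths are well-defined). -/
def maxLen (θ : A → Finset (List A)) (a : A) : ℕ := (θ a).sup List.length

/-- Recognisability: every `x ∈ X_ϑ` has a unique inflation-word decomposition. -/
def Recognisable (θ : A → Finset (List A)) : Prop :=
  ∀ x ∈ Xtheta θ, ∃! p : (ℤ → A) × ℕ,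
    p.1 ∈ Xtheta θ ∧ p.2 < maxLen θ (p.1 0) ∧
      (fun i => x (i - (p.2 : ℤ))) ∈ substSeq θ p.1

/-- Recognisability of the `m`-th power of a constant length-`ℓ` substitution. -/
def RecognisablePow (θ : A → Finset (List A)) (m ℓ : ℕ) : Prop :=
  ∀ x ∈ Xtheta θ, ∃! p : (ℤ → A) × ℕ,
    p.1 ∈ Xtheta θ ∧ p.2 < ℓ ^ m ∧
      (fun i => x (i - (p.2 : ℤ))) ∈ substSeqPow θ m p.1

/-- The set `ϑ^m([a])` of exact images of sequences in the cylinder `[a] ⊆ X_ϑ`. -/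
def inflCylPow (θ : A → Finset (List A)) (m : ℕ) (a : A) : Set (ℤ → A) :=
  ⋃ y ∈ {w ∈ Xtheta θ | w 0 = a}, substSeqPow θ m y

/-- `r` is a radius of local recognisability for `ϑ^m`. -/
def RecogPropPow (θ : A → Finset (List A)) (m r : ℕ) : Prop :=
  ∀ (a : A) (x : ℤ → A), x ∈ inflCylPow θ m a → ∀ y ∈ Xtheta θ,
    (∀ t : ℤ, -(r : ℤ) ≤ t → t ≤ (r : ℤ) → x t = y t) → y ∈ inflCylPow θ m a

/-- The recognisability radius `κ(ϑ^m)`. -/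
noncomputable def recogRadiusPow (θ : A → Finset (List A)) (m : ℕ) : ℕ :=
  sInf {r | RecogPropPow θ m r}

/-- The recognisability radius `κ(ϑ)`. -/
noncomputable def recogRadius (θ : A → Finset (List A)) : ℕ := recogRadiusPow θ 1

/-- The random word `ϑ_P^n(a)` is (a.s.) completely determined by `ϑ_P^{n+k}(a)`
in the Markov chain. -/
def DeterminedBy (θ : A → Finset (List A)) (P : A → List A → ℝ)
    (a : A) (n k : ℕ) : Prop :=
  ∀ v₁ v₂ w : List A, v₁ ∈ realsIter θ n [a] → v₂ ∈ realsIter θ n [a] →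
    0 < iterProb θ P n [a] v₁ * iterProb θ P k v₁ w →
      0 < iterProb θ P n [a] v₂ * iterProb θ P k v₂ w → v₁ = v₂

/-- The random words `ϑ_P^n(a)` and `ϑ_P^{n+k}(a)` are independent in the Markov chain. -/
def IndepSteps (θ : A → Finset (List A)) (P : A → List A → ℝ)
    (a : A) (n k : ℕ) : Prop :=
  ∀ v w : List A,
    iterProb θ P n [a] v * iterProb θ P k v w =
      iterProb θ P n [a] v * iterProb θ P (n + k) [a] w

/-- The substitution matrix of a marginal (deterministic) substitution. -/
def marginalM (ρ : A → List A) : Matrix A A ℝ :=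
  Matrix.of fun i j => ((ρ j).count i : ℝ)

/-- Geometric compatibility: a single positive left eigenvector with eigenvalue `λ > 1`
for all marginals. -/
def GeometricallyCompatible (θ : A → Finset (List A)) : Prop :=
  ∃ lam : ℝ, 1 < lam ∧ ∃ L : A → ℝ, (∀ a, 0 < L a) ∧
    ∀ ρ : A → List A, (∀ a, ρ a ∈ θ a) → Matrix.vecMul L (marginalM ρ) = lam • L



end RandomSubstitutionTheory

/-!
Letters are substituted independently, so `ϑ_P` acts on `ℝ[A*]` as the algebra endomorphism
sending a letter `a` to `∑_{v ∈ ϑ(a)} P(v) v`, and the law of `ϑ_P^n(u u')` is the product of the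
laws of `ϑ_P^n(u)` and `ϑ_P^n(u')`. Entropy is therefore subadditive under concatenation, and
additive when concatenation of realisations is injective, as it is under unique realisation
paths; hence `H(ϑ_P^n(v)) ≤ ∑_b |v|_b H_{n,b}`. Conditioning `ϑ_P^{n+1}(a)` on the first step gives
`H_{n+1,a} ≤ H_{1,a} + ∑_v P(v) H(ϑ_P^n(v))`, with equality when the sets `ϑ^n(v)`, `v ∈ ϑ(a)`,
are disjoint and strict inequality when two of them meet. Pairing with `R` turns this into
`H_{n+1}ᵀR ≤ H_1ᵀR + λ H_nᵀR`, which iterates to `H_nᵀR ≤ H_1ᵀR (λ^n - 1) / (λ - 1)`. Under the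
disjoint set condition every step is an equality, while a single overlap makes one step strict.
-/

namespace RandomSubstitutionTheory

open MonoidAlgebra (single)
open scoped MonoidAlgebra

variable {A : Type*}

section NegMulLog

open Real

lemma mul_neg_log_le_negMulLog {x y : ℝ} (hx : 0 ≤ x) (hxy : x ≤ y) :
    x * -log y ≤ negMulLog x := by
  rcases hx.eq_or_lt with rfl | hx
  · simp
  · rw [negMulLog, neg_mul, ← mul_neg]
    exact mul_le_mul_of_nonneg_left (neg_le_neg (log_le_log hx hxy)) hx.le

lemma mul_neg_log_lt_negMulLog {x y : ℝ} (hx : 0 < x) (hxy : x < y) :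
    x * -log y < negMulLog x := by
  rw [negMulLog, neg_mul, ← mul_neg]
  exact mul_lt_mul_of_pos_left (neg_lt_neg (log_lt_log hx hxy)) hx

variable {ι γ : Type*} {s : Finset ι} {q : ι → ℝ}

lemma negMulLog_sum_eq_sum_mul_neg_log :
    negMulLog (∑ i ∈ s, q i) = ∑ i ∈ s, q i * -log (∑ j ∈ s, q j) := by
  rw [negMulLog, neg_mul, ← mul_neg, Finset.sum_mul]

theorem negMulLog_sum_le (hq : ∀ i ∈ s, 0 ≤ q i) :
    negMulLog (∑ i ∈ s, q i) ≤ ∑ i ∈ s, negMulLog (q i) := by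
  rw [negMulLog_sum_eq_sum_mul_neg_log]
  exact Finset.sum_le_sum fun i hi =>
    mul_neg_log_le_negMulLog (hq i hi) (Finset.single_le_sum hq hi)

theorem negMulLog_sum_lt (hq : ∀ i ∈ s, 0 ≤ q i) {i j : ι} (hi : i ∈ s) (hj : j ∈ s)
    (hij : i ≠ j) (hqi : 0 < q i) (hqj : 0 < q j) :
    negMulLog (∑ k ∈ s, q k) < ∑ k ∈ s, negMulLog (q k) := by
  rw [negMulLog_sum_eq_sum_mul_neg_log]
  refine Finset.sum_lt_sum (fun k hk =>
    mul_neg_log_le_negMulLog (hq k hk) (Finset.single_le_sum hq hk)) ⟨i, hi, ?_⟩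
  exact mul_neg_log_lt_negMulLog hqi
    (Finset.single_lt_sum hij.symm hi hj hqj fun k hk _ => hq k hk)

theorem negMulLog_sum_of_card_le_one (hs : s.card ≤ 1) :
    negMulLog (∑ i ∈ s, q i) = ∑ i ∈ s, negMulLog (q i) := by
  rcases s.eq_empty_or_nonempty with rfl | ⟨i, hi⟩
  · simp
  · rw [Finset.eq_singleton_iff_unique_mem.2 ⟨hi, fun j hj => Finset.card_le_one.1 hs j hj i hi⟩]
    simp

theorem sum_negMulLog_const_mul (c : ℝ) (hq1 : ∑ i ∈ s, q i = 1) :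
    ∑ i ∈ s, negMulLog (c * q i) = negMulLog c + c * ∑ i ∈ s, negMulLog (q i) := by
  simp only [negMulLog_mul, Finset.sum_add_distrib, ← Finset.sum_mul, ← Finset.mul_sum, hq1,
    one_mul]

variable [DecidableEq γ] {t : Finset γ} {f : ι → γ}

theorem sum_negMulLog_fiberwise_le (hf : ∀ i ∈ s, f i ∈ t) (hq : ∀ i ∈ s, 0 ≤ q i) :
    ∑ c ∈ t, negMulLog (∑ i ∈ s with f i = c, q i) ≤ ∑ i ∈ s, negMulLog (q i) := by
  rw [← Finset.sum_fiberwise_of_maps_to hf]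
  exact Finset.sum_le_sum fun c _ =>
    negMulLog_sum_le fun i hi => hq i (Finset.mem_filter.1 hi).1

theorem sum_negMulLog_fiberwise_eq (hf : ∀ i ∈ s, f i ∈ t) (hinj : Set.InjOn f s) :
    ∑ c ∈ t, negMulLog (∑ i ∈ s with f i = c, q i) = ∑ i ∈ s, negMulLog (q i) := by
  rw [← Finset.sum_fiberwise_of_maps_to hf]
  refine Finset.sum_congr rfl fun c _ => negMulLog_sum_of_card_le_one ?_
  refine Finset.card_le_one.2 fun i hi j hj => hinj ?_ ?_ ?_
  · exact (Finset.mem_filter.1 hi).1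
  · exact (Finset.mem_filter.1 hj).1
  · rw [(Finset.mem_filter.1 hi).2, (Finset.mem_filter.1 hj).2]

theorem sum_negMulLog_fiberwise_lt (hf : ∀ i ∈ s, f i ∈ t) (hq : ∀ i ∈ s, 0 ≤ q i)
    {i j : ι} (hi : i ∈ s) (hj : j ∈ s) (hij : i ≠ j) (hfij : f i = f j)
    (hqi : 0 < q i) (hqj : 0 < q j) :
    ∑ c ∈ t, negMulLog (∑ i ∈ s with f i = c, q i) < ∑ i ∈ s, negMulLog (q i) := by
  rw [← Finset.sum_fiberwise_of_maps_to hf]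
  refine Finset.sum_lt_sum (fun c _ =>
    negMulLog_sum_le fun k hk => hq k (Finset.mem_filter.1 hk).1) ⟨f i, hf i hi, ?_⟩
  exact negMulLog_sum_lt (fun k hk => hq k (Finset.mem_filter.1 hk).1)
    (Finset.mem_filter.2 ⟨hi, rfl⟩) (Finset.mem_filter.2 ⟨hj, hfij.symm⟩) hij hqi hqj

end NegMulLog

section GeometricRecursion

variable {x : ℕ → ℝ} {c r : ℝ}

theorem le_mul_geom_sum_of_le_add_mul (hr : 0 ≤ r) (h0 : x 0 = 0)
    (h : ∀ n, x (n + 1) ≤ c + r * x n) (n : ℕ) : x n ≤ c * ∑ i ∈ Finset.range n, r ^ i := by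
  induction n with
  | zero => simp [h0]
  | succ n ih =>
    calc x (n + 1) ≤ c + r * x n := h n
      _ ≤ c + r * (c * ∑ i ∈ Finset.range n, r ^ i) := by gcongr
      _ = c * ∑ i ∈ Finset.range (n + 1), r ^ i := by rw [geom_sum_succ]; ring

theorem eq_mul_geom_sum_of_eq_add_mul (h0 : x 0 = 0) (h : ∀ n, x (n + 1) = c + r * x n)
    (n : ℕ) : x n = c * ∑ i ∈ Finset.range n, r ^ i := by
  induction n with
  | zero => simp [h0]
  | succ n ih => rw [h, ih, geom_sum_succ]; ring

theorem eq_add_mul_of_eq_mul_geom_sum (h : ∀ n, x n = c * ∑ i ∈ Finset.range n, r ^ i)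
    (n : ℕ) : x (n + 1) = c + r * x n := by
  rw [h, h, geom_sum_succ]
  ring

variable {y : ℝ} {n : ℕ}

lemma div_pow_sub_one_le_iff (hr : 1 < r) (hn : n ≠ 0) :
    y / (r ^ n - 1) ≤ c / (r - 1) ↔ y ≤ c * ∑ i ∈ Finset.range n, r ^ i := by
  rw [geom_sum_eq hr.ne', div_le_iff₀ (sub_pos.2 (one_lt_pow₀ hr hn)), div_mul_eq_mul_div,
    mul_div_assoc]

lemma div_pow_sub_one_eq_iff (hr : 1 < r) (hn : n ≠ 0) :
    y / (r ^ n - 1) = c / (r - 1) ↔ y = c * ∑ i ∈ Finset.range n, r ^ i := by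
  rw [geom_sum_eq hr.ne', div_eq_iff (sub_pos.2 (one_lt_pow₀ hr hn)).ne', div_mul_eq_mul_div,
    mul_div_assoc]

end GeometricRecursion

section WordAlgebra

variable (θ : A → Finset (List A)) (P : A → List A → ℝ)

noncomputable def letterDist (a : A) : ℝ[FreeMonoid A] :=
  ∑ v ∈ θ a, single (FreeMonoid.ofList v) (P a v)

noncomputable def substHom : ℝ[FreeMonoid A] →ₐ[ℝ] ℝ[FreeMonoid A] :=
  MonoidAlgebra.lift ℝ _ _ (FreeMonoid.lift (letterDist θ P))

noncomputable def iterDist (n : ℕ) (u : List A) : ℝ[FreeMonoid A] :=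
  (substHom θ P ^ n) (single (FreeMonoid.ofList u) 1)

noncomputable def totalMass : ℝ[FreeMonoid A] →ₐ[ℝ] ℝ :=
  MonoidAlgebra.lift ℝ ℝ (FreeMonoid A) 1

variable {θ P}

lemma substHom_single_ofList_cons (a : A) (u : List A) :
    substHom θ P (single (FreeMonoid.ofList (a :: u)) 1) =
      letterDist θ P a * substHom θ P (single (FreeMonoid.ofList u) 1) := by
  have : single (FreeMonoid.ofList (a :: u)) (1 : ℝ) =
      single (FreeMonoid.of a) 1 * single (FreeMonoid.ofList u) 1 := by
    rw [MonoidAlgebra.single_mul_single, mul_one, FreeMonoid.ofList_cons]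
  rw [this, map_mul, substHom, MonoidAlgebra.lift_single, one_smul, FreeMonoid.lift_eval_of]

lemma iterDist_append (n : ℕ) (u u' : List A) :
    iterDist θ P n (u ++ u') = iterDist θ P n u * iterDist θ P n u' := by
  rw [iterDist, iterDist, iterDist, ← map_mul, MonoidAlgebra.single_mul_single, mul_one,
    FreeMonoid.ofList_append]

lemma totalMass_substHom (hP1 : ∀ a, ∑ v ∈ θ a, P a v = 1) (x : ℝ[FreeMonoid A]) :
    totalMass (substHom θ P x) = totalMass x := by
  have hletter : (totalMass (A := A) : ℝ[FreeMonoid A] →* ℝ).comp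
      (FreeMonoid.lift (letterDist θ P)) = 1 :=
    FreeMonoid.hom_eq fun a => by simp [totalMass, letterDist, hP1]
  have hcomp : totalMass.comp (substHom θ P) = totalMass := by
    refine MonoidAlgebra.algHom_ext (fun m => ?_) (Subsingleton.elim _ _)
    rw [AlgHom.comp_apply, substHom, MonoidAlgebra.lift_single, one_smul]
    exact (DFunLike.congr_fun hletter m).trans (by simp [totalMass])
  exact DFunLike.congr_fun hcomp x

lemma totalMass_substHom_pow (hP1 : ∀ a, ∑ v ∈ θ a, P a v = 1) (n : ℕ) (x : ℝ[FreeMonoid A]) :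
    totalMass ((substHom θ P ^ n) x) = totalMass x := by
  induction n generalizing x with
  | zero => rfl
  | succ n ih => rw [pow_succ, AlgHom.mul_apply, ih, totalMass_substHom hP1]

end WordAlgebra

section RandomSubstitution

variable [DecidableEq A] {θ : A → Finset (List A)} {P : A → List A → ℝ}

section Laws

lemma coeff_single_ofList_mul (v w : List A) (r : ℝ) (x : ℝ[FreeMonoid A]) :
    (single (FreeMonoid.ofList v) r * x).coeff (FreeMonoid.ofList w) =
      if v <+: w then r * x.coeff (FreeMonoid.ofList (w.drop v.length)) else 0 := by
  split_ifs with h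
  · obtain ⟨t, rfl⟩ := h
    rw [List.drop_left]
    refine MonoidAlgebra.coeff_single_mul_eq_mul_coeff _ fun m _ => ?_
    rw [FreeMonoid.ofList_append, mul_right_inj]
  · refine MonoidAlgebra.coeff_single_mul_of_forall_mul_ne _ _ fun d hd => h ⟨d.toList, ?_⟩
    rw [← FreeMonoid.toList_ofList w, ← hd, FreeMonoid.toList_mul, FreeMonoid.toList_ofList]

lemma wordProb_eq_coeff (u w : List A) :
    wordProb θ P u w =
      (substHom θ P (single (FreeMonoid.ofList u) 1)).coeff (FreeMonoid.ofList w) := by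
  induction u generalizing w with
  | nil =>
    classical
    rw [FreeMonoid.ofList_nil, ← MonoidAlgebra.one_def, map_one, MonoidAlgebra.one_def,
      MonoidAlgebra.coeff_single, Finsupp.single_apply, wordProb]
    simp only [← FreeMonoid.ofList_nil, Equiv.apply_eq_iff_eq, eq_comm]
  | cons a u ih =>
    rw [substHom_single_ofList_cons, letterDist, Finset.sum_mul, MonoidAlgebra.coeff_sum,
      Finsupp.finsetSum_apply, wordProb]
    refine Finset.sum_congr rfl fun v _ => ?_
    rw [coeff_single_ofList_mul, ih]
    split_ifs <;> simp

lemma mem_reals_cons {a : A} {u w : List A} :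
    w ∈ reals θ (a :: u) ↔ ∃ v ∈ θ a, ∃ y ∈ reals θ u, v ++ y = w := by
  simp only [reals, Finset.mem_biUnion, Finset.mem_image]

lemma reals_singleton (a : A) : reals θ [a] = θ a := by
  ext w
  simp [reals]

lemma wordProb_eq_zero {u w : List A} (hw : w ∉ reals θ u) : wordProb θ P u w = 0 := by
  induction u generalizing w with
  | nil => simpa [wordProb, reals] using hw
  | cons a u ih =>
    refine Finset.sum_eq_zero fun v hv => ?_
    split_ifs with h
    · obtain ⟨t, rfl⟩ := h
      rw [List.drop_left, ih fun ht => hw (mem_reals_cons.2 ⟨v, hv, t, ht, rfl⟩), mul_zero]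
    · rw [mul_zero]

lemma substHom_single_ofList (u : List A) :
    substHom θ P (single (FreeMonoid.ofList u) 1) =
      ∑ v ∈ reals θ u, wordProb θ P u v • single (FreeMonoid.ofList v) 1 := by
  classical
  ext m
  rw [MonoidAlgebra.coeff_sum, Finsupp.finsetSum_apply, ← FreeMonoid.ofList_toList m,
    ← wordProb_eq_coeff]
  simp only [MonoidAlgebra.coeff_smul, Finsupp.smul_apply, MonoidAlgebra.coeff_single,
    Finsupp.single_apply, Equiv.apply_eq_iff_eq, smul_eq_mul, mul_ite, mul_one, mul_zero]
  rw [Finset.sum_ite_eq']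
  split_ifs with h
  · rfl
  · exact wordProb_eq_zero h

lemma iterProb_eq_coeff (n : ℕ) (u w : List A) :
    iterProb θ P n u w = (iterDist θ P n u).coeff (FreeMonoid.ofList w) := by
  induction n generalizing u with
  | zero =>
    classical
    simp [iterDist, iterProb, MonoidAlgebra.coeff_single, Finsupp.single_apply]
  | succ n ih =>
    rw [iterDist, pow_succ, AlgHom.mul_apply, substHom_single_ofList, map_sum,
      MonoidAlgebra.coeff_sum, Finsupp.finsetSum_apply, iterProb]
    refine Finset.sum_congr rfl fun v _ => ?_
    rw [map_smul, MonoidAlgebra.coeff_smul, Finsupp.smul_apply, smul_eq_mul, ih]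
    rfl

lemma mem_realsIter_succ {n : ℕ} {u w : List A} :
    w ∈ realsIter θ (n + 1) u ↔ ∃ v ∈ reals θ u, w ∈ realsIter θ n v :=
  Finset.mem_biUnion

lemma realsIter_nil (n : ℕ) : realsIter θ n ([] : List A) = {[]} := by
  induction n with
  | zero => rfl
  | succ n ih => simp [realsIter, reals, ih]

lemma realsIter_singleton_one (a : A) : realsIter θ 1 [a] = θ a := by
  ext w
  simp [realsIter, reals_singleton]

lemma iterProb_eq_zero {n : ℕ} {u w : List A} (hw : w ∉ realsIter θ n u) :
    iterProb θ P n u w = 0 := by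
  induction n generalizing u with
  | zero => exact if_neg fun h => hw (Finset.mem_singleton.2 h.symm)
  | succ n ih =>
    refine Finset.sum_eq_zero fun v hv => ?_
    rw [ih fun h => hw (mem_realsIter_succ.2 ⟨v, hv, h⟩), mul_zero]

lemma support_iterDist_subset (n : ℕ) (u : List A) :
    (iterDist θ P n u).coeff.support ⊆ (realsIter θ n u).map FreeMonoid.ofList.toEmbedding := by
  intro m hm
  rw [Finsupp.mem_support_iff, ← FreeMonoid.ofList_toList m, ← iterProb_eq_coeff] at hm
  exact Finset.mem_map_equiv.2 (not_imp_comm.1 iterProb_eq_zero hm)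

lemma sum_coeff_iterDist {M : Type*} [AddCommMonoid M] (n : ℕ) (u : List A)
    (g : FreeMonoid A → ℝ → M) (hg : ∀ m, g m 0 = 0) :
    (iterDist θ P n u).coeff.sum g =
      ∑ w ∈ realsIter θ n u, g (FreeMonoid.ofList w) (iterProb θ P n u w) := by
  rw [Finsupp.sum_of_support_subset _ (support_iterDist_subset n u) g fun m _ => hg m,
    Finset.sum_map]
  simp only [iterProb_eq_coeff]
  rfl

theorem iterProb_append (n : ℕ) (u u' w : List A) :
    iterProb θ P n (u ++ u') w =
      ∑ p ∈ realsIter θ n u ×ˢ realsIter θ n u' with p.1 ++ p.2 = w,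
        iterProb θ P n u p.1 * iterProb θ P n u' p.2 := by
  classical
  rw [iterProb_eq_coeff, iterDist_append, MonoidAlgebra.coeff_mul,
    sum_coeff_iterDist _ _ _ fun _ => by simp, Finset.sum_filter, Finset.sum_product]
  refine Finset.sum_congr rfl fun x _ => ?_
  rw [sum_coeff_iterDist _ _ _ fun _ => by simp]
  simp only [← FreeMonoid.ofList_append, Equiv.apply_eq_iff_eq]

theorem iterProb_singleton_succ (n : ℕ) (a : A) (w : List A) :
    iterProb θ P (n + 1) [a] w = ∑ v ∈ θ a, P a v * iterProb θ P n v w := by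
  classical
  rw [iterProb, reals_singleton]
  refine Finset.sum_congr rfl fun v hv => ?_
  rw [wordProb_eq_coeff, substHom_single_ofList_cons, FreeMonoid.ofList_nil,
    ← MonoidAlgebra.one_def, map_one, mul_one, letterDist, MonoidAlgebra.coeff_sum,
    Finsupp.finsetSum_apply]
  simp only [MonoidAlgebra.coeff_single, Finsupp.single_apply, Equiv.apply_eq_iff_eq]
  rw [Finset.sum_ite_eq', if_pos hv]

lemma Legal.of_cons {a : A} {u : List A} (h : Legal θ (a :: u)) : Legal θ u := by
  obtain ⟨b, k, w, hw, hinf⟩ := h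
  exact ⟨b, k, w, hw, (List.suffix_cons a u).isInfix.trans hinf⟩

theorem sum_iterProb (hP1 : ∀ a, ∑ v ∈ θ a, P a v = 1) (n : ℕ) (u : List A) :
    ∑ w ∈ realsIter θ n u, iterProb θ P n u w = 1 := by
  have h := totalMass_substHom_pow hP1 n (single (FreeMonoid.ofList u) 1)
  rw [← iterDist, totalMass, MonoidAlgebra.lift_apply, MonoidAlgebra.lift_single] at h
  simp only [MonoidHom.one_apply, smul_eq_mul, mul_one] at h
  rwa [sum_coeff_iterDist n u (fun _ r => r) fun _ => rfl] at h

end Laws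

section Support

variable (hP : ∀ a, ∀ v ∈ θ a, 0 < P a v)
include hP

lemma wordProb_nonneg (u w : List A) : 0 ≤ wordProb θ P u w := by
  induction u generalizing w with
  | nil => unfold wordProb; positivity
  | cons a u ih =>
    refine Finset.sum_nonneg fun v hv => mul_nonneg (hP a v hv).le ?_
    split_ifs
    exacts [ih _, le_rfl]

lemma wordProb_pos {u w : List A} (hw : w ∈ reals θ u) : 0 < wordProb θ P u w := by
  induction u generalizing w with
  | nil => simp_all [reals, wordProb]
  | cons a u ih =>
    obtain ⟨v, hv, y, hy, rfl⟩ := mem_reals_cons.1 hw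
    refine Finset.sum_pos' (fun x hx => mul_nonneg (hP a x hx).le ?_) ⟨v, hv, ?_⟩
    · split_ifs
      exacts [wordProb_nonneg hP _ _, le_rfl]
    · rw [if_pos (List.prefix_append v y), List.drop_left]
      exact mul_pos (hP a v hv) (ih hy)

lemma iterProb_nonneg (n : ℕ) (u w : List A) : 0 ≤ iterProb θ P n u w := by
  induction n generalizing u with
  | zero => unfold iterProb; positivity
  | succ n ih => exact Finset.sum_nonneg fun v _ => mul_nonneg (wordProb_nonneg hP u v) (ih v)

lemma iterProb_pos {n : ℕ} {u w : List A} (hw : w ∈ realsIter θ n u) :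
    0 < iterProb θ P n u w := by
  induction n generalizing u with
  | zero => simp_all [realsIter, iterProb]
  | succ n ih =>
    obtain ⟨v, hv, hw⟩ := mem_realsIter_succ.1 hw
    refine Finset.sum_pos' (fun x _ => ?_) ⟨v, hv, mul_pos (wordProb_pos hP hv) (ih hw)⟩
    exact mul_nonneg (wordProb_nonneg hP u x) (iterProb_nonneg hP n x w)

lemma mem_realsIter_append {n : ℕ} {u u' x y : List A} (hx : x ∈ realsIter θ n u)
    (hy : y ∈ realsIter θ n u') : x ++ y ∈ realsIter θ n (u ++ u') := by
  by_contra h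
  have hzero := iterProb_eq_zero (P := P) h
  rw [iterProb_append] at hzero
  refine hzero.not_gt (Finset.sum_pos' (fun p _ => ?_) ⟨(x, y), ?_, ?_⟩)
  · exact mul_nonneg (iterProb_nonneg hP _ _ _) (iterProb_nonneg hP _ _ _)
  · exact Finset.mem_filter.2 ⟨Finset.mem_product.2 ⟨hx, hy⟩, rfl⟩
  · exact mul_pos (iterProb_pos hP hx) (iterProb_pos hP hy)

lemma exists_append_eq_of_mem_realsIter_append {n : ℕ} {u u' w : List A}
    (hw : w ∈ realsIter θ n (u ++ u')) :
    ∃ x ∈ realsIter θ n u, ∃ y ∈ realsIter θ n u', x ++ y = w := by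
  have h := (iterProb_pos hP hw).ne'
  rw [iterProb_append] at h
  obtain ⟨p, hp, -⟩ := Finset.exists_ne_zero_of_sum_ne_zero h
  obtain ⟨hmem, rfl⟩ := Finset.mem_filter.1 hp
  exact ⟨p.1, (Finset.mem_product.1 hmem).1, p.2, (Finset.mem_product.1 hmem).2, rfl⟩

lemma exists_flatten_eq_of_mem_realsIter {n : ℕ} {u w : List A} (hw : w ∈ realsIter θ n u) :
    ∃ f : Fin u.length → List A,
      (∀ i, f i ∈ realsIter θ n [u.get i]) ∧ (List.ofFn f).flatten = w := by
  induction u generalizing w with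
  | nil =>
    rw [realsIter_nil, Finset.mem_singleton] at hw
    exact ⟨Fin.elim0, Fin.rec0, hw.symm⟩
  | cons a u ih =>
    obtain ⟨x, hx, y, hy, rfl⟩ :=
      exists_append_eq_of_mem_realsIter_append hP (u := [a]) (u' := u) hw
    obtain ⟨f, hf, rfl⟩ := ih hy
    exact ⟨Fin.cons x f, Fin.cases hx hf, by simp⟩

theorem injOn_append_of_uniqueRealisationPaths (hU : UniqueRealisationPaths θ) {n : ℕ} {a : A}
    {u : List A} (hleg : Legal θ (a :: u)) :
    Set.InjOn (fun p : List A × List A => p.1 ++ p.2) (realsIter θ n [a] ×ˢ realsIter θ n u) := by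
  rintro ⟨x, y⟩ ⟨hx, hy⟩ ⟨x', y'⟩ ⟨hx', hy'⟩ (h : x ++ y = x' ++ y')
  obtain ⟨f, hf, rfl⟩ := exists_flatten_eq_of_mem_realsIter hP hy
  obtain ⟨f', hf', rfl⟩ := exists_flatten_eq_of_mem_realsIter hP hy'
  have := hU (a :: u) hleg n (Fin.cons x f) (Fin.cons x' f') (Fin.cases hx hf)
    (Fin.cases hx' hf') (by simpa using h)
  obtain ⟨rfl, rfl⟩ := Fin.cons_inj.1 this
  rfl

end Support

section Entropy

noncomputable def wordEntropy (θ : A → Finset (List A)) (P : A → List A → ℝ) (n : ℕ)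
    (u : List A) : ℝ :=
  ∑ w ∈ realsIter θ n u, Real.negMulLog (iterProb θ P n u w)

lemma wordEntropy_nil (hP1 : ∀ a, ∑ v ∈ θ a, P a v = 1) (n : ℕ) :
    wordEntropy θ P n ([] : List A) = 0 := by
  have h := sum_iterProb hP1 n ([] : List A)
  rw [realsIter_nil, Finset.sum_singleton] at h
  rw [wordEntropy, realsIter_nil, Finset.sum_singleton, h, Real.negMulLog_one]

lemma wordEntropy_append_eq_fiberwise (n : ℕ) (u u' : List A) :
    wordEntropy θ P n (u ++ u') = ∑ w ∈ realsIter θ n (u ++ u'), Real.negMulLog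
      (∑ p ∈ realsIter θ n u ×ˢ realsIter θ n u' with p.1 ++ p.2 = w,
        iterProb θ P n u p.1 * iterProb θ P n u' p.2) := by
  simp only [wordEntropy, iterProb_append]

lemma wordEntropy_add_wordEntropy (hP1 : ∀ a, ∑ v ∈ θ a, P a v = 1) (n : ℕ) (u u' : List A) :
    wordEntropy θ P n u + wordEntropy θ P n u' = ∑ p ∈ realsIter θ n u ×ˢ realsIter θ n u',
      Real.negMulLog (iterProb θ P n u p.1 * iterProb θ P n u' p.2) := by
  simp only [Finset.sum_product, sum_negMulLog_const_mul _ (sum_iterProb hP1 n u'),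
    Finset.sum_add_distrib, ← Finset.sum_mul, sum_iterProb hP1, one_mul, wordEntropy]

/-- The joint realisations of `(ϑ(a), ϑ^{n+1}(a))`. -/
def jointReals (θ : A → Finset (List A)) (n : ℕ) (a : A) : Finset ((_ : List A) × List A) :=
  (θ a).sigma fun v => realsIter θ n v

lemma snd_mem_realsIter_succ {n : ℕ} {a : A} {p : (_ : List A) × List A}
    (hp : p ∈ jointReals θ n a) : p.2 ∈ realsIter θ (n + 1) [a] := by
  obtain ⟨hv, hw⟩ := Finset.mem_sigma.1 hp
  exact mem_realsIter_succ.2 ⟨p.1, reals_singleton (θ := θ) a ▸ hv, hw⟩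

lemma Hvec_one (a : A) : Hvec θ P 1 a = ∑ v ∈ θ a, Real.negMulLog (P a v) := by
  rw [Hvec, realsIter_singleton_one]
  refine Finset.sum_congr rfl fun w hw => ?_
  rw [iterProb_singleton_succ, Finset.sum_eq_single_of_mem w hw fun v _ hvw => ?_]
  · simp [iterProb]
  · simp [iterProb, hvw]

lemma Hvec_succ_eq_fiberwise (n : ℕ) (a : A) :
    Hvec θ P (n + 1) a = ∑ w ∈ realsIter θ (n + 1) [a], Real.negMulLog
      (∑ p ∈ jointReals θ n a with p.2 = w, P a p.1 * iterProb θ P n p.1 p.2) := by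
  refine Finset.sum_congr rfl fun w _ => ?_
  rw [iterProb_singleton_succ, Finset.sum_filter, jointReals, Finset.sum_sigma]
  refine congrArg _ (Finset.sum_congr rfl fun v _ => ?_)
  rw [Finset.sum_ite_eq']
  split_ifs with h
  · rfl
  · rw [iterProb_eq_zero h, mul_zero]

lemma Hvec_one_add_sum_mul_wordEntropy (hP1 : ∀ a, ∑ v ∈ θ a, P a v = 1) (n : ℕ) (a : A) :
    Hvec θ P 1 a + ∑ v ∈ θ a, P a v * wordEntropy θ P n v =
      ∑ p ∈ jointReals θ n a, Real.negMulLog (P a p.1 * iterProb θ P n p.1 p.2) := by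
  rw [jointReals, Finset.sum_sigma, Hvec_one, ← Finset.sum_add_distrib]
  exact Finset.sum_congr rfl fun v _ =>
    (sum_negMulLog_const_mul _ (sum_iterProb hP1 n v)).symm

theorem Hvec_succ_eq_of_disjointSetCondition (hP1 : ∀ a, ∑ v ∈ θ a, P a v = 1)
    (hD : DisjointSetCondition θ) (n : ℕ) (a : A) :
    Hvec θ P (n + 1) a = Hvec θ P 1 a + ∑ v ∈ θ a, P a v * wordEntropy θ P n v := by
  rw [Hvec_succ_eq_fiberwise, Hvec_one_add_sum_mul_wordEntropy hP1]
  refine sum_negMulLog_fiberwise_eq (fun p => snd_mem_realsIter_succ) fun p hp p' hp' h => ?_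
  obtain ⟨hv, hw⟩ := Finset.mem_sigma.1 hp
  obtain ⟨hv', hw'⟩ := Finset.mem_sigma.1 hp'
  have h1 : p.1 = p'.1 := by
    by_contra hne
    exact hD a n p.1 hv p'.1 hv' hne p.2 hw (h ▸ hw')
  exact Sigma.ext h1 (heq_of_eq h)

variable (hP : ∀ a, ∀ v ∈ θ a, 0 < P a v) (hP1 : ∀ a, ∑ v ∈ θ a, P a v = 1)
include hP hP1

theorem wordEntropy_append_le (n : ℕ) (u u' : List A) :
    wordEntropy θ P n (u ++ u') ≤ wordEntropy θ P n u + wordEntropy θ P n u' := by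
  rw [wordEntropy_append_eq_fiberwise, wordEntropy_add_wordEntropy hP1]
  refine sum_negMulLog_fiberwise_le (fun p hp => ?_) fun p _ => ?_
  · obtain ⟨hx, hy⟩ := Finset.mem_product.1 hp
    exact mem_realsIter_append hP hx hy
  · exact mul_nonneg (iterProb_nonneg hP _ _ _) (iterProb_nonneg hP _ _ _)

theorem wordEntropy_append_of_injOn {n : ℕ} {u u' : List A}
    (hinj : Set.InjOn (fun p : List A × List A => p.1 ++ p.2)
      (realsIter θ n u ×ˢ realsIter θ n u')) :
    wordEntropy θ P n (u ++ u') = wordEntropy θ P n u + wordEntropy θ P n u' := by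
  rw [wordEntropy_append_eq_fiberwise, wordEntropy_add_wordEntropy hP1]
  refine sum_negMulLog_fiberwise_eq (fun p hp => ?_) (by simpa using hinj)
  obtain ⟨hx, hy⟩ := Finset.mem_product.1 hp
  exact mem_realsIter_append hP hx hy

theorem wordEntropy_le_sum_map_Hvec (n : ℕ) (u : List A) :
    wordEntropy θ P n u ≤ (u.map (Hvec θ P n)).sum := by
  induction u with
  | nil => simp [wordEntropy_nil hP1]
  | cons a u ih =>
    rw [List.map_cons, List.sum_cons, ← List.singleton_append]
    exact (wordEntropy_append_le hP hP1 n [a] u).trans (add_le_add le_rfl ih)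

theorem wordEntropy_eq_sum_map_Hvec (hU : UniqueRealisationPaths θ) (n : ℕ) {u : List A}
    (hleg : Legal θ u) : wordEntropy θ P n u = (u.map (Hvec θ P n)).sum := by
  induction u with
  | nil => simp [wordEntropy_nil hP1]
  | cons a u ih =>
    rw [List.map_cons, List.sum_cons, ← List.singleton_append,
      wordEntropy_append_of_injOn hP hP1 (injOn_append_of_uniqueRealisationPaths hP hU hleg),
      ih hleg.of_cons]
    rfl

theorem Hvec_succ_le (n : ℕ) (a : A) :
    Hvec θ P (n + 1) a ≤ Hvec θ P 1 a + ∑ v ∈ θ a, P a v * wordEntropy θ P n v := by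
  rw [Hvec_succ_eq_fiberwise, Hvec_one_add_sum_mul_wordEntropy hP1]
  exact sum_negMulLog_fiberwise_le (fun p => snd_mem_realsIter_succ) fun p hp =>
    mul_nonneg (hP a p.1 (Finset.mem_sigma.1 hp).1).le (iterProb_nonneg hP _ _ _)

theorem Hvec_succ_lt_of_not_disjoint {n : ℕ} {a : A} {u v w : List A}
    (hu : u ∈ θ a) (hv : v ∈ θ a) (huv : u ≠ v) (hwu : w ∈ realsIter θ n u)
    (hwv : w ∈ realsIter θ n v) :
    Hvec θ P (n + 1) a < Hvec θ P 1 a + ∑ v ∈ θ a, P a v * wordEntropy θ P n v := by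
  rw [Hvec_succ_eq_fiberwise, Hvec_one_add_sum_mul_wordEntropy hP1]
  refine sum_negMulLog_fiberwise_lt (fun p => snd_mem_realsIter_succ) (fun p hp =>
    mul_nonneg (hP a p.1 (Finset.mem_sigma.1 hp).1).le (iterProb_nonneg hP _ _ _))
    (i := ⟨u, w⟩) (j := ⟨v, w⟩) (Finset.mem_sigma.2 ⟨hu, hwu⟩) (Finset.mem_sigma.2 ⟨hv, hwv⟩)
    (fun h => huv (Sigma.mk.inj h).1) rfl ?_ ?_
  · exact mul_pos (hP a u hu) (iterProb_pos hP hwu)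
  · exact mul_pos (hP a v hv) (iterProb_pos hP hwv)

end Entropy

section Recursion

variable [Fintype A] {lam : ℝ} {R : A → ℝ}

lemma sum_map_eq_sum_count (H : A → ℝ) (v : List A) :
    (v.map H).sum = ∑ b, (v.count b : ℝ) * H b := by
  rw [Finset.sum_list_map_count, Finset.sum_subset (Finset.subset_univ _) fun b _ hb => ?_]
  · simp only [nsmul_eq_mul]
  · rw [List.count_eq_zero_of_not_mem (mt List.mem_toFinset.2 hb), zero_smul]

lemma sum_mul_sum_map_eq_vecMul (H : A → ℝ) (a : A) :
    ∑ v ∈ θ a, P a v * (v.map H).sum = Matrix.vecMul H (substM θ P) a := by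
  simp only [sum_map_eq_sum_count, Matrix.vecMul, dotProduct, substM, Matrix.of_apply,
    Finset.mul_sum]
  rw [Finset.sum_comm]
  exact Finset.sum_congr rfl fun b _ => Finset.sum_congr rfl fun v _ => by ring

lemma HdotR_zero : HdotR θ P R 0 = 0 := by
  simp [HdotR, Hvec, realsIter, iterProb]

lemma dotProduct_Hvec_one_add_vecMul (hEig : (substM θ P).mulVec R = lam • R) (n : ℕ) :
    (Hvec θ P 1 + Matrix.vecMul (Hvec θ P n) (substM θ P)) ⬝ᵥ R =
      HdotR θ P R 1 + lam * HdotR θ P R n := by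
  rw [add_dotProduct, ← Matrix.dotProduct_mulVec, hEig, dotProduct_smul, smul_eq_mul]
  rfl

variable (hP : ∀ a, ∀ v ∈ θ a, 0 < P a v) (hP1 : ∀ a, ∑ v ∈ θ a, P a v = 1)
include hP hP1

lemma sum_mul_wordEntropy_le_vecMul (n : ℕ) (a : A) :
    ∑ v ∈ θ a, P a v * wordEntropy θ P n v ≤ Matrix.vecMul (Hvec θ P n) (substM θ P) a := by
  rw [← sum_mul_sum_map_eq_vecMul]
  exact Finset.sum_le_sum fun v hv => mul_le_mul_of_nonneg_left
    (wordEntropy_le_sum_map_Hvec hP hP1 n v) (hP a v hv).le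

theorem Hvec_succ_le_vecMul (n : ℕ) (a : A) :
    Hvec θ P (n + 1) a ≤ Hvec θ P 1 a + Matrix.vecMul (Hvec θ P n) (substM θ P) a :=
  (Hvec_succ_le hP hP1 n a).trans (add_le_add le_rfl (sum_mul_wordEntropy_le_vecMul hP hP1 n a))

theorem HdotR_succ_le (hR : ∀ a, 0 ≤ R a) (hEig : (substM θ P).mulVec R = lam • R) (n : ℕ) :
    HdotR θ P R (n + 1) ≤ HdotR θ P R 1 + lam * HdotR θ P R n := by
  rw [← dotProduct_Hvec_one_add_vecMul hEig]
  exact Finset.sum_le_sum fun a _ =>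
    mul_le_mul_of_nonneg_right (Hvec_succ_le_vecMul hP hP1 n a) (hR a)

theorem HdotR_succ_eq_of_disjointSetCondition (hEig : (substM θ P).mulVec R = lam • R)
    (hU : UniqueRealisationPaths θ) (hD : DisjointSetCondition θ) (n : ℕ) :
    HdotR θ P R (n + 1) = HdotR θ P R 1 + lam * HdotR θ P R n := by
  rw [← dotProduct_Hvec_one_add_vecMul hEig]
  refine Finset.sum_congr rfl fun a _ => congrArg (· * R a) ?_
  rw [Pi.add_apply, Hvec_succ_eq_of_disjointSetCondition hP1 hD, ← sum_mul_sum_map_eq_vecMul]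
  refine congrArg _ (Finset.sum_congr rfl fun v hv => ?_)
  have hleg : Legal θ v := ⟨a, 1, v, realsIter_singleton_one (θ := θ) a ▸ hv, List.infix_rfl⟩
  rw [wordEntropy_eq_sum_map_Hvec hP hP1 hU n hleg]

theorem HdotR_succ_lt_of_not_disjoint (hR : ∀ a, 0 < R a)
    (hEig : (substM θ P).mulVec R = lam • R) {n : ℕ} {a : A} {u v w : List A}
    (hu : u ∈ θ a) (hv : v ∈ θ a) (huv : u ≠ v) (hwu : w ∈ realsIter θ n u)
    (hwv : w ∈ realsIter θ n v) :
    HdotR θ P R (n + 1) < HdotR θ P R 1 + lam * HdotR θ P R n := by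
  rw [← dotProduct_Hvec_one_add_vecMul hEig]
  refine Finset.sum_lt_sum (fun b _ => mul_le_mul_of_nonneg_right
    (Hvec_succ_le_vecMul hP hP1 n b) (hR b).le) ⟨a, Finset.mem_univ a, ?_⟩
  refine mul_lt_mul_of_pos_right ?_ (hR a)
  exact (Hvec_succ_lt_of_not_disjoint hP hP1 hu hv huv hwu hwv).trans_le
    (add_le_add le_rfl (sum_mul_wordEntropy_le_vecMul hP hP1 n a))

end Recursion

end RandomSubstitution

theorem statement10_general {A : Type*} [Fintype A] [DecidableEq A]
    (θ : A → Finset (List A)) (P : A → List A → ℝ) (lam : ℝ) (R : A → ℝ)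
    (hRS : IsRandomSubstitution θ P) (hlam : 1 < lam)
    (hRpos : ∀ a, 0 < R a)
    (hEig : (substM θ P).mulVec R = lam • R) :
    (∀ n : ℕ, 1 ≤ n → HdotR θ P R n / (lam ^ n - 1) ≤ HdotR θ P R 1 / (lam - 1)) ∧
      (UniqueRealisationPaths θ →
        ((∀ n : ℕ, 1 ≤ n → HdotR θ P R n / (lam ^ n - 1) = HdotR θ P R 1 / (lam - 1)) ↔
          DisjointSetCondition θ)) := by
  obtain ⟨-, -, hP, -, hP1⟩ := hRS
  refine ⟨fun n hn => ?_, fun hU => ⟨fun heq => ?_, fun hD n hn => ?_⟩⟩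
  · rw [div_pow_sub_one_le_iff hlam (by omega)]
    exact le_mul_geom_sum_of_le_add_mul (by linarith) HdotR_zero
      (HdotR_succ_le hP hP1 (fun a => (hRpos a).le) hEig) n
  · intro a k u hu v hv huv w hwu hwv
    have hclosed : ∀ n, HdotR θ P R n = HdotR θ P R 1 * ∑ i ∈ Finset.range n, lam ^ i := by
      rintro (_ | n)
      · simp [HdotR_zero]
      · exact (div_pow_sub_one_eq_iff hlam n.succ_ne_zero).1 (heq _ n.succ_pos)
    exact (HdotR_succ_lt_of_not_disjoint hP hP1 hRpos hEig hu hv huv hwu hwv).ne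
      (eq_add_mul_of_eq_mul_geom_sum hclosed k)
  · rw [div_pow_sub_one_eq_iff hlam (by omega)]
    exact eq_mul_geom_sum_of_eq_add_mul HdotR_zero
      (HdotR_succ_eq_of_disjointSetCondition hP hP1 hEig hU hD) n

theorem statement10 {A : Type*} [Fintype A] [DecidableEq A]
    (θ : A → Finset (List A)) (P : A → List A → ℝ) (lam : ℝ) (R : A → ℝ)
    (hRS : IsRandomSubstitution θ P) (hprim : IsPrimitive θ P) (hlam : 1 < lam)
    (hRpos : ∀ a, 0 < R a) (hRsum : ∑ a, R a = 1)
    (hEig : (substM θ P).mulVec R = lam • R) :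
    (∀ n : ℕ, 1 ≤ n → HdotR θ P R n / (lam ^ n - 1) ≤ HdotR θ P R 1 / (lam - 1)) ∧
      (UniqueRealisationPaths θ →
        ((∀ n : ℕ, 1 ≤ n → HdotR θ P R n / (lam ^ n - 1) = HdotR θ P R 1 / (lam - 1)) ↔
          DisjointSetCondition θ)) :=
  statement10_general θ P lam R hRS hlam hRpos hEig

end RandomSubstitutionTheory
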